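/- arXiv:1010.5481 — 4 statements merged into one kernel-verified Lean document; each statement's English description precedes it below -/
import Mathlib

section
/- Let k be a positive natural number and let X be a subset of ℕ^k, i.e., of the additive semigroup of functions Fin k → ℕ under pointwise addition. Suppose X is grounded, meaning that for every index i ∈ Fin k there exists an element x ∈ X whose support is exactly {i} (that is, x i > 0 and x j = 0 for all j ≠ i). Then X is finitely generated: there exists a finite subset Y ⊆ X such that every element x of X is the sum of some finite multiset of elements of Y (where the empty multiset sums to the zero vector). -/
/-!
Let `e i ∈ X` be the grounded element on the `i`-th axis and `a i := e i i`. Split `X` into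
the finitely many classes of its elements' residues modulo `a`. By Dickson's lemma each class
has finitely many minimal elements, and every `x` in the class lies above one of them, `b`;
then `x - b` is a multiple of `a` in each coordinate, so `x = b + ∑ i, cᵢ • e i`. The minimal
elements of all classes together with the `e i` therefore generate `X`.
-/

theorem Set.exists_finset_subset_forall_exists_le {α : Type*} [PartialOrder α]
    [WellQuasiOrderedLE α] (S : Set α) : ∃ B : Finset α, ↑B ⊆ S ∧ ∀ s ∈ S, ∃ b ∈ B, b ≤ s := by
  have hfin : {x | Minimal (· ∈ S) x}.Finite :=
    WellQuasiOrderedLE.finite_of_isAntichain (setOfPred_minimal_antichain _)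
  refine ⟨hfin.toFinset, fun x hx => (hfin.mem_toFinset.1 hx).prop, fun s hs => ?_⟩
  obtain ⟨b, hbs, hb⟩ := (isPWO_of_wellQuasiOrderedLE S).exists_le_minimal hs
  exact ⟨b, hfin.mem_toFinset.2 hb, hbs⟩

theorem mem_addSubmonoidClosure_of_le_of_modEq {ι : Type*} [Fintype ι] [DecidableEq ι]
    {S : Set (ι → ℕ)} {a b x : ι → ℕ} (hb : b ∈ S) (ha : ∀ i, Pi.single i (a i) ∈ S)
    (hbx : b ≤ x) (hmod : ∀ i, b i ≡ x i [MOD a i]) : x ∈ AddSubmonoid.closure S := by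
  have hx : x = b + ∑ i, ((x i - b i) / a i) • Pi.single i (a i) := by
    funext i
    simp only [Pi.add_apply, Finset.sum_apply, Pi.smul_apply, Pi.single_apply, smul_eq_mul,
      mul_ite, mul_zero, Finset.sum_ite_eq, Finset.mem_univ, if_true]
    rw [Nat.div_mul_cancel ((Nat.modEq_iff_dvd' (hbx i)).1 (hmod i)), Nat.add_sub_cancel' (hbx i)]
  rw [hx]
  exact add_mem (AddSubmonoid.subset_closure hb)
    (sum_mem fun i _ => nsmul_mem (AddSubmonoid.subset_closure (ha i)) _)

theorem grounded_finitely_generated_general (k : ℕ) (X : Set (Fin k → ℕ))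
    (hground : ∀ i : Fin k, ∃ x ∈ X, x i > 0 ∧ ∀ j : Fin k, j ≠ i → x j = 0) :
    ∃ Y : Finset (Fin k → ℕ), ↑Y ⊆ X ∧
      ∀ x ∈ X, ∃ m : Multiset (Fin k → ℕ), (∀ y ∈ m, y ∈ Y) ∧ m.sum = x := by
  classical
  choose e heX hpos hsupp using hground
  set a : Fin k → ℕ := fun i => e i i
  have he : ∀ i, e i = Pi.single i (a i) := fun i => funext fun j => by
    rcases eq_or_ne j i with rfl | hj
    · simp [a]
    · simp [hsupp i j hj, hj]
  let residueClass (r : Fin k → ℕ) : Set (Fin k → ℕ) := {x ∈ X | ∀ i, x i % a i = r i}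
  choose B hBX hB using fun r => (residueClass r).exists_finset_subset_forall_exists_le
  let residues := Fintype.piFinset fun i => Finset.range (a i)
  refine ⟨residues.biUnion B ∪ Finset.univ.image e, ?_, fun x hx => ?_⟩
  · intro y hy
    simp only [Finset.coe_union, Finset.coe_biUnion, Finset.coe_image, Set.mem_union,
      Set.mem_iUnion, Finset.mem_coe, Set.mem_image] at hy
    rcases hy with ⟨r, -, hyB⟩ | ⟨i, -, rfl⟩
    exacts [(hBX r hyB).1, heX i]
  obtain ⟨b, hbB, hbx⟩ := hB (fun i => x i % a i) x ⟨hx, fun _ => rfl⟩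
  have hres : (fun i => x i % a i) ∈ residues :=
    Fintype.mem_piFinset.2 fun i => Finset.mem_range.2 (Nat.mod_lt _ (hpos i))
  refine AddSubmonoid.exists_multiset_of_mem_closure
    (mem_addSubmonoidClosure_of_le_of_modEq ?_ (fun i => ?_) hbx (hBX _ hbB).2)
  · exact Finset.mem_union_left _ (Finset.mem_biUnion.2 ⟨_, hres, hbB⟩)
  · exact he i ▸ Finset.mem_union_right _ (Finset.mem_image_of_mem e (Finset.mem_univ i))

/-- **Grounded subsets of ℕ^k are finitely generated.**
If `X ⊆ ℕ^k` is grounded (for every index `i` there is an element of `X`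
whose support is exactly `{i}`), then there is a finite `Y ⊆ X` such that
every element of `X` is the sum of a finite multiset of elements of `Y`. -/
theorem grounded_finitely_generated (k : ℕ) (hk : 0 < k) (X : Set (Fin k → ℕ))
    (hground : ∀ i : Fin k, ∃ x ∈ X, x i > 0 ∧ ∀ j : Fin k, j ≠ i → x j = 0) :
    ∃ Y : Finset (Fin k → ℕ), ↑Y ⊆ X ∧
      ∀ x ∈ X, ∃ m : Multiset (Fin k → ℕ), (∀ y ∈ m, y ∈ Y) ∧ m.sum = x :=
  grounded_finitely_generated_general k X hground
end

section
/- Let M be an additive commutative semigroup and let f : M → (ℕ →₀ ℕ) be a map into finitely supported functions from ℕ to ℕ that is additive, i.e., f (P + Q) = f P + f Q for all P, Q ∈ M. Suppose f has regulars: for every natural number i there exists P ∈ M such that the support of f P is exactly {i}. Fix a natural number k. Then there exists a finite subset Z of {P : M | f P i = 0 for all i > k} such that for every P ∈ M with f P i = 0 for all i > k, there is a finite multiset m of elements of Z with f P = the sum of f Q over Q ∈ m (the empty multiset summing to 0). -/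
/-!
Pick regulars `R i` with `f (R i) = single i (c i)`, `c i ≠ 0`. The values `f P` of bounded
elements live in `{g | g.support ⊆ Iic k}`, which is partially well-ordered by Dickson's lemma.
Split these values by their residues `g i % c i` (finitely many classes) and take the minimal
elements of each class: this is a finite set, and every value `f P` lies above a minimal `f Q`
of its class. Then `f P - f Q` is divisible by `c i` in each coordinate `i ≤ k`, so it is a sum of
copies of the `f (R i)`.
-/

namespace Finsupp

theorem isPWO_setOf_support_subset {σ α : Type*} [Zero α] [Preorder α] [WellQuasiOrderedLE α]
    (s : Finset σ) : {g : σ →₀ α | g.support ⊆ s}.IsPWO := by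
  classical
  have hmono : Monotone (extendDomain : (s →₀ α) → σ →₀ α) := fun g h hgh a => by
    by_cases ha : a ∈ s <;> simp [ha, hgh _]
  refine ((Set.isPWO_of_wellQuasiOrderedLE Set.univ).image_of_monotone hmono).mono
    fun g hg => ?_
  exact ⟨subtypeDomain (· ∈ s) g, trivial, extendDomain_subtypeDomain g fun a ha => hg ha⟩

theorem eq_add_sum_single_tsub {σ : Type*} {g h : σ →₀ ℕ} {s : Finset σ} (hle : h ≤ g)
    (hg : g.support ⊆ s) : g = h + ∑ i ∈ s, single i (g i - h i) := by
  have hs : (g - h).support ⊆ s := fun i hi => hg (by simp at hi ⊢; omega)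
  simp_rw [← tsub_apply]
  rw [← sum_of_support_subset _ hs _ (by simp), sum_single, add_tsub_cancel_of_le hle]

theorem exists_eq_add_sum_nsmul_single_of_modEq {σ : Type*} {g h : σ →₀ ℕ} {s : Finset σ}
    {c : σ → ℕ} (hle : h ≤ g) (hg : g.support ⊆ s) (hmod : ∀ i ∈ s, h i ≡ g i [MOD c i]) :
    ∃ n : σ → ℕ, g = h + ∑ i ∈ s, n i • single i (c i) := by
  refine ⟨fun i => (g i - h i) / c i, ?_⟩
  conv_lhs => rw [eq_add_sum_single_tsub hle hg]
  refine congrArg (h + ·) (Finset.sum_congr rfl fun i hi => ?_)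
  rw [smul_single, smul_eq_mul, Nat.div_mul_cancel ((Nat.modEq_iff_dvd' (hle i)).1 (hmod i hi))]

end Finsupp

theorem Set.IsPWO.exists_finset_forall_exists_le_of_finite_image {α κ : Type*} [PartialOrder α]
    {S : Set α} (hS : S.IsPWO) (key : α → κ) (hkey : (key '' S).Finite) :
    ∃ T : Finset α, ↑T ⊆ S ∧ ∀ g ∈ S, ∃ h ∈ T, h ≤ g ∧ key h = key g := by
  set B := ⋃ c ∈ key '' S, {h | Minimal (· ∈ S ∩ key ⁻¹' {c}) h}
  have hB : B.Finite := hkey.biUnion fun c _ =>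
    (setOfPred_minimal_antichain _).finite_of_partiallyWellOrderedOn
      (hS.mono fun h hh => hh.1.1)
  refine ⟨hB.toFinset, fun h hh => ?_, fun g hg => ?_⟩
  · obtain ⟨c, -, hc⟩ := Set.mem_iUnion₂.1 (hB.mem_toFinset.1 hh)
    exact hc.1.1
  · obtain ⟨h, hle, hmin⟩ := (hS.mono Set.inter_subset_left).exists_le_minimal
      (show g ∈ S ∩ key ⁻¹' {key g} from ⟨hg, rfl⟩)
    exact ⟨h, hB.mem_toFinset.2 (Set.mem_biUnion (Set.mem_image_of_mem _ hg) hmin), hle,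
      hmin.1.2⟩

theorem Multiset.sum_map_cons_sum_replicate {M N ι : Type*} [AddCommMonoid N] (f : M → N)
    (Q : M) (s : Finset ι) (n : ι → ℕ) (R : ι → M) :
    ((Q ::ₘ ∑ i ∈ s, replicate (n i) (R i)).map f).sum = f Q + ∑ i ∈ s, n i • f (R i) := by
  rw [map_cons, sum_cons, ← coe_mapAddMonoidHom, map_sum, ← coe_sumAddMonoidHom, map_sum]
  simp

section Representation

variable {M σ : Type*} (f : M → σ →₀ ℕ) {s : Finset σ} {c : σ → ℕ}

theorem exists_finset_forall_exists_le_and_modEq (hc : ∀ i ∈ s, c i ≠ 0) :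
    ∃ Z : Finset M, (∀ Q ∈ Z, (f Q).support ⊆ s) ∧ ∀ P, (f P).support ⊆ s →
      ∃ Q ∈ Z, f Q ≤ f P ∧ ∀ i ∈ s, f Q i ≡ f P i [MOD c i] := by
  classical
  set B := {P : M | (f P).support ⊆ s}
  have hS : (f '' B).IsPWO := (Finsupp.isPWO_setOf_support_subset s).mono
    (Set.image_subset_iff.2 fun _ hP => hP)
  obtain ⟨T, hTS, hT⟩ := hS.exists_finset_forall_exists_le_of_finite_image
    (fun g (i : s) => g i % c i)
    ((Set.Finite.pi (ι := s) fun i => Set.finite_Iio (c i)).subset fun _ ⟨g, _, hg⟩ =>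
      hg ▸ fun i _ => Nat.mod_lt _ (Nat.pos_of_ne_zero (hc i i.2)))
  obtain ⟨Z, hZB, rfl⟩ := Finset.subset_set_image_iff.1 hTS
  refine ⟨Z, fun Q hQ => hZB hQ, fun P hP => ?_⟩
  obtain ⟨_, hQT, hQP, hmod⟩ := hT (f P) ⟨P, hP, rfl⟩
  obtain ⟨Q, hQ, rfl⟩ := Finset.mem_image.1 hQT
  exact ⟨Q, hQ, hQP, fun i hi => congrFun hmod ⟨i, hi⟩⟩

theorem exists_multiset_eq_sum_map_of_le_of_modEq (R : σ → M)
    (hR : ∀ i ∈ s, f (R i) = Finsupp.single i (c i)) {P Q : M} (hP : (f P).support ⊆ s)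
    (hQP : f Q ≤ f P) (hmod : ∀ i ∈ s, f Q i ≡ f P i [MOD c i]) :
    ∃ m : Multiset M, (∀ X ∈ m, X = Q ∨ ∃ i ∈ s, X = R i) ∧ f P = (m.map f).sum := by
  obtain ⟨n, hn⟩ := Finsupp.exists_eq_add_sum_nsmul_single_of_modEq hQP hP hmod
  refine ⟨Q ::ₘ ∑ i ∈ s, Multiset.replicate (n i) (R i), fun X hX => ?_, ?_⟩
  · simp only [Multiset.mem_cons, Multiset.mem_sum, Multiset.mem_replicate] at hX
    rcases hX with rfl | ⟨i, hi, -, rfl⟩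
    exacts [.inl rfl, .inr ⟨i, hi, rfl⟩]
  · rw [Multiset.sum_map_cons_sum_replicate, hn]
    exact congrArg _ (Finset.sum_congr rfl fun i hi => by rw [hR i hi])

end Representation

theorem finitely_representable_of_additive_of_hasRegulars_general
    {M : Type*} [AddCommSemigroup M] (f : M → (ℕ →₀ ℕ))
    (hreg : ∀ i : ℕ, ∃ P : M, (f P).support = {i})
    (k : ℕ) :
    ∃ Z : Finset M, (∀ P ∈ Z, ∀ i > k, f P i = 0) ∧
      ∀ P : M, (∀ i > k, f P i = 0) →
        ∃ m : Multiset M, (∀ Q ∈ m, Q ∈ Z) ∧ f P = (m.map f).sum := by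
  classical
  choose R hR using hreg
  have hRc : ∀ i, f (R i) i ≠ 0 ∧ f (R i) = Finsupp.single i (f (R i) i) := fun i =>
    Finsupp.support_eq_singleton.1 (hR i)
  have bounded_iff : ∀ g : ℕ →₀ ℕ, (∀ i > k, g i = 0) ↔ g.support ⊆ Finset.Iic k := fun g => by
    simp [Finset.subset_iff, not_imp_comm]
  obtain ⟨Z, hZ, hZP⟩ := exists_finset_forall_exists_le_and_modEq f (s := Finset.Iic k)
    fun i _ => (hRc i).1
  refine ⟨Z ∪ (Finset.Iic k).image R, ?_, fun P hP => ?_⟩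
  · simp only [Finset.mem_union, Finset.mem_image, Finset.mem_Iic]
    rintro _ (hQ | ⟨j, hj, rfl⟩)
    · exact (bounded_iff _).2 (hZ _ hQ)
    · exact fun i hi => by rw [(hRc j).2, Finsupp.single_eq_of_ne (by omega)]
  have hPs := (bounded_iff _).1 hP
  obtain ⟨Q, hQ, hQP, hmod⟩ := hZP P hPs
  obtain ⟨m, hm, hPm⟩ :=
    exists_multiset_eq_sum_map_of_le_of_modEq f R (fun i _ => (hRc i).2) hPs hQP hmod
  refine ⟨m, fun X hX => ?_, hPm⟩
  rcases hm X hX with rfl | ⟨i, hi, rfl⟩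
  exacts [Finset.mem_union_left _ hQ, Finset.mem_union_right _ (Finset.mem_image_of_mem R hi)]

/-- **Main theorem in semigroup form.**
Let `M` be an additive commutative semigroup and `f : M → (ℕ →₀ ℕ)` an additive
map ("structured set function") that has regulars (every singleton support `{i}`
is achieved). Then for every `k`, the bounded part `{P | f P i = 0 for all i > k}`
is `f`-finitely representable: there is a finite set `Z` of bounded elements such
that every bounded `P` satisfies `f P = ∑ f Q` over some finite multiset of
elements of `Z`. -/
theorem finitely_representable_of_additive_of_hasRegulars
    {M : Type*} [AddCommSemigroup M] (f : M → (ℕ →₀ ℕ))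
    (hadd : ∀ P Q : M, f (P + Q) = f P + f Q)
    (hreg : ∀ i : ℕ, ∃ P : M, (f P).support = {i})
    (k : ℕ) :
    ∃ Z : Finset M, (∀ P ∈ Z, ∀ i > k, f P i = 0) ∧
      ∀ P : M, (∀ i > k, f P i = 0) →
        ∃ m : Multiset M, (∀ Q ∈ m, Q ∈ Z) ∧ f P = (m.map f).sum :=
  finitely_representable_of_additive_of_hasRegulars_general f hreg k
end

section
/- Fix a natural number k. There exists a natural number N such that for every finite simple graph G with maximum degree at most k, there exists a finite simple graph H whose degree multiset equals the degree multiset of G and each of whose connected components has at most N vertices. -/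
open scoped Classical

/-- The degree multiset of a finite simple graph: the multiset of vertex
degrees counted with multiplicity. -/
noncomputable def degMultiset {V : Type} [Fintype V] (G : SimpleGraph V) : Multiset ℕ :=
  Finset.univ.val.map fun v => G.degree v

/-!
Take `N = (k + 1) ^ 5` and induct on the number of vertices. In a larger graph some degree
`d ≤ k` occurs more than `(k + 1) ^ 4` times, and since a ball of radius `3` has at most
`(k + 1) ^ 3` vertices, a greedy choice gives a set `S` of `d + 1` vertices of degree `d` at
pairwise distance at least `4`. For each `v ∈ S`, match the other `d` vertices `u` of `S` with
the `d` neighbours `p v u` of `v`. Deleting the edges at `S`, making `S` a clique and joining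
`p v u` to `p u v` preserves every degree: by the scattering, the neighbourhoods of the vertices
of `S` are disjoint and have no edges between them, so a vertex outside `S` loses at most one edge
and gains as many new ones. Then `S` is a component with `d + 1 ≤ k + 1` vertices, and the rest
is a smaller graph.
-/

open Finset

namespace SimpleGraph

variable {V W : Type*}

theorem degree_eq_of_neighborSet_eq_image {G : SimpleGraph V} {G' : SimpleGraph W} {v : V}
    {w : W} [Fintype (G.neighborSet v)] [Fintype (G'.neighborSet w)] {f : V → W}
    (hf : Function.Injective f) (h : G'.neighborSet w = f '' G.neighborSet v) :
    G'.degree w = G.degree v := by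
  rw [← card_neighborSet_eq_degree, ← card_neighborSet_eq_degree, ← Nat.card_eq_fintype_card,
    ← Nat.card_eq_fintype_card, h, Nat.card_image_of_injective hf]

theorem degree_sum_inl (G : SimpleGraph V) (H : SimpleGraph W) (v : V)
    [Fintype (G.neighborSet v)] [Fintype ((G ⊕g H).neighborSet (.inl v))] :
    (G ⊕g H).degree (.inl v) = G.degree v :=
  degree_eq_of_neighborSet_eq_image Sum.inl_injective (neighborSet_sum_inl v)

theorem degree_sum_inr (G : SimpleGraph V) (H : SimpleGraph W) (w : W)
    [Fintype (H.neighborSet w)] [Fintype ((G ⊕g H).neighborSet (.inr w))] :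
    (G ⊕g H).degree (.inr w) = H.degree w :=
  degree_eq_of_neighborSet_eq_image Sum.inr_injective (neighborSet_sum_inr w)

theorem Reachable.eq_of_adj_imp_eq {G : SimpleGraph V} {β : Type*} {f : V → β}
    (hf : ∀ x y, G.Adj x y → f x = f y) {u v : V} (h : G.Reachable u v) : f u = f v := by
  obtain ⟨p⟩ := h
  induction p with
  | nil => rfl
  | cons hadj _ ih => exact (hf _ _ hadj).trans ih

namespace ConnectedComponent

theorem ncard_supp_le_of_adj_imp_eq [Finite V] {G : SimpleGraph V} {β : Type*} {f : V → β}
    (hf : ∀ x y, G.Adj x y → f x = f y) {N : ℕ} (hN : ∀ b, (f ⁻¹' {b}).ncard ≤ N)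
    (c : G.ConnectedComponent) : c.supp.ncard ≤ N := by
  obtain ⟨v, rfl⟩ := c.exists_rep
  have hsub : (G.connectedComponentMk v).supp ⊆ f ⁻¹' {f v} := fun w hw =>
    (ConnectedComponent.exact hw).eq_of_adj_imp_eq hf
  exact (Set.ncard_le_ncard hsub (Set.toFinite _)).trans (hN (f v))

theorem ncard_supp_sum_le [Finite V] [Finite W] {G : SimpleGraph V} {H : SimpleGraph W} {N : ℕ}
    (hG : ∀ c : G.ConnectedComponent, c.supp.ncard ≤ N)
    (hH : ∀ c : H.ConnectedComponent, c.supp.ncard ≤ N) (c : (G ⊕g H).ConnectedComponent) :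
    c.supp.ncard ≤ N := by
  let f := Sum.map G.connectedComponentMk H.connectedComponentMk
  refine c.ncard_supp_le_of_adj_imp_eq (f := f) ?_ ?_
  · rintro (x | x) (y | y) h <;> simp [f] at h ⊢ <;> exact h.reachable
  · rintro (b | b)
    · have hb : f ⁻¹' {.inl b} = Sum.inl '' b.supp := by ext (x | x) <;> simp [f]
      rw [hb, Set.ncard_image_of_injective _ Sum.inl_injective]
      exact hG b
    · have hb : f ⁻¹' {.inr b} = Sum.inr '' b.supp := by ext (x | x) <;> simp [f]
      rw [hb, Set.ncard_image_of_injective _ Sum.inr_injective]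
      exact hH b

theorem ncard_supp_le_of_iso {G : SimpleGraph V} {G' : SimpleGraph W} {N : ℕ} (φ : G ≃g G')
    (hG : ∀ c : G.ConnectedComponent, c.supp.ncard ≤ N) (c : G'.ConnectedComponent) :
    c.supp.ncard ≤ N := by
  obtain ⟨c, rfl⟩ := φ.connectedComponentEquiv.surjective c
  rw [← Nat.card_coe_set_eq, ← Nat.card_congr (isoEquivSupp φ c), Nat.card_coe_set_eq]
  exact hG c

end ConnectedComponent

end SimpleGraph

open SimpleGraph

section DegMultiset

variable {V W : Type} [Fintype V] [Fintype W]

theorem degMultiset_congr {G H : SimpleGraph V} (h : ∀ v, G.degree v = H.degree v) :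
    degMultiset G = degMultiset H :=
  Multiset.map_congr rfl fun v _ => h v

theorem degMultiset_eq_of_iso {G : SimpleGraph V} {H : SimpleGraph W} (φ : G ≃g H) :
    degMultiset H = degMultiset G := by
  rw [degMultiset, ← Multiset.map_univ_val_equiv φ.toEquiv, Multiset.map_map, Function.comp_def]
  exact Multiset.map_congr rfl fun v _ => φ.degree_eq v

theorem degMultiset_sum (G : SimpleGraph V) (H : SimpleGraph W) :
    degMultiset (G ⊕g H) = degMultiset G + degMultiset H := by
  simp only [degMultiset, ← univ_disjSum_univ, val_disjSum, Multiset.disjSum, Multiset.map_add,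
    Multiset.map_map, Function.comp_def, degree_sum_inl, degree_sum_inr]

theorem degMultiset_eq_induce_add_induce_compl (G : SimpleGraph V) (s : Set V) [Fintype s]
    [Fintype ↥sᶜ] (hs : ∀ x y, G.Adj x y → x ∈ s → y ∈ s) :
    degMultiset G = degMultiset (G.induce s) + degMultiset (G.induce sᶜ) := by
  have hinduce (t : Set V) [Fintype t] (ht : ∀ x ∈ t, G.neighborSet x ⊆ t) :
      degMultiset (G.induce t) = (univ.val.filter (· ∈ t)).map fun v => G.degree v := by
    rw [← filter_val, ← univ_val_map_subtype_restrict]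
    refine Multiset.map_congr rfl fun v _ => ?_
    rw [Subtype.restrict_apply]
    convert degree_induce_of_neighborSet_subset (ht v v.2)
  rw [hinduce s fun x hx y hy => hs x y hy hx,
    hinduce sᶜ fun x hx y hy hys => hx (hs y x hy.symm hys), degMultiset, ← Multiset.map_add]
  congr 1
  convert (Multiset.filter_add_not (· ∈ s) univ.val).symm

end DegMultiset

def BoundedComponentRealizable (N : ℕ) (D : Multiset ℕ) : Prop :=
  ∃ (W : Type) (_ : Fintype W) (H : SimpleGraph W),
    degMultiset H = D ∧ ∀ c : H.ConnectedComponent, c.supp.ncard ≤ N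

namespace BoundedComponentRealizable

variable {N : ℕ} {D D₁ D₂ : Multiset ℕ}

theorem of_card_le {V : Type} [Fintype V] (G : SimpleGraph V) (h : Fintype.card V ≤ N) :
    BoundedComponentRealizable N (degMultiset G) :=
  ⟨V, _, G, rfl, fun c =>
    (Set.ncard_le_card c.supp).trans (Nat.card_eq_fintype_card (α := V) ▸ h)⟩

theorem add (h₁ : BoundedComponentRealizable N D₁) (h₂ : BoundedComponentRealizable N D₂) :
    BoundedComponentRealizable N (D₁ + D₂) := by
  obtain ⟨W₁, _, H₁, rfl, hc₁⟩ := h₁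
  obtain ⟨W₂, _, H₂, rfl, hc₂⟩ := h₂
  exact ⟨W₁ ⊕ W₂, _, H₁ ⊕g H₂, degMultiset_sum H₁ H₂,
    ConnectedComponent.ncard_supp_sum_le hc₁ hc₂⟩

theorem exists_fin (h : BoundedComponentRealizable N D) :
    ∃ (n : ℕ) (H : SimpleGraph (Fin n)),
      degMultiset H = D ∧ ∀ c : H.ConnectedComponent, c.supp.ncard ≤ N := by
  obtain ⟨W, _, H, rfl, hc⟩ := h
  let φ := Iso.map (Fintype.equivFin W) H
  exact ⟨_, _, degMultiset_eq_of_iso φ, ConnectedComponent.ncard_supp_le_of_iso φ hc⟩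

end BoundedComponentRealizable

theorem Finset.exists_subset_card_eq_pairwise_notMem {α : Type*} [Finite α] {B : α → Set α}
    {D : ℕ} (hD : 0 < D) (hself : ∀ u, u ∈ B u) (hsymm : ∀ u v, v ∈ B u → u ∈ B v)
    (hB : ∀ u, (B u).ncard ≤ D) (m : ℕ) (T : Finset α) (hT : m * D ≤ #T) :
    ∃ S ⊆ T, #S = m ∧ (S : Set α).Pairwise fun u v => v ∉ B u := by
  induction m generalizing T with
  | zero => exact ⟨∅, empty_subset _, rfl, by simp⟩
  | succ m ih =>
    obtain ⟨u, hu⟩ : T.Nonempty := card_pos.1 (lt_of_lt_of_le (by positivity) hT)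
    have hfar : m * D ≤ #(T.filter (· ∉ B u)) := by
      have hnear : #(T.filter (· ∈ B u)) ≤ D :=
        (Set.ncard_coe_finset _ ▸ Set.ncard_le_ncard fun v hv => (mem_filter.1 hv).2).trans (hB u)
      have := card_filter_add_card_filter_not (s := T) (· ∈ B u)
      rw [Nat.succ_mul] at hT
      omega
    obtain ⟨S, hST, hS, hSpair⟩ := ih _ hfar
    have huS : u ∉ S := fun h => (mem_filter.1 (hST h)).2 (hself u)
    refine ⟨insert u S, insert_subset hu (hST.trans (filter_subset _ _)),
      by rw [card_insert_of_notMem huS, hS], ?_⟩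
    rw [coe_insert, Set.pairwise_insert]
    exact ⟨hSpair, fun v hv _ =>
      ⟨(mem_filter.1 (hST hv)).2, fun h => (mem_filter.1 (hST hv)).2 (hsymm v u h)⟩⟩

namespace SimpleGraph

section Ball

variable {V : Type*} {G : SimpleGraph V} {k : ℕ} {u v x y : V}

theorem ncard_ball_le [Fintype V] (hk : ∀ v, G.degree v ≤ k) (c : V) (r : ℕ) :
    (G.ball c (r + 1)).ncard ≤ (k + 1) ^ r := by
  induction r generalizing c with
  | zero => simp
  | succ r ih =>
    have hsub : G.ball c (↑(r + 1) + 1) ⊆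
        insert c (⋃ x ∈ G.neighborFinset c, G.ball x (r + 1)) := by
      intro v hv
      rw [mem_ball_comm, mem_ball] at hv
      obtain ⟨p, hp⟩ := exists_walk_of_edist_ne_top (hv.trans_le le_top).ne
      cases p with
      | nil => exact Set.mem_insert _ _
      | @cons _ x _ hcx q =>
        refine Set.mem_insert_of_mem _ (Set.mem_biUnion (mem_neighborFinset _ _ _ |>.2 hcx) ?_)
        rw [← hp, Walk.length_cons] at hv
        rw [mem_ball, edist_comm]
        exact (edist_le q).trans_lt (by norm_cast at hv ⊢; omega)
    calc (G.ball c (↑(r + 1) + 1)).ncard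
        ≤ (⋃ x ∈ G.neighborFinset c, G.ball x (r + 1)).ncard + 1 :=
          (Set.ncard_le_ncard hsub).trans (Set.ncard_insert_le _ _)
      _ ≤ ∑ x ∈ G.neighborFinset c, (G.ball x (r + 1)).ncard + 1 := by
          gcongr; exact set_ncard_biUnion_le _ _
      _ ≤ k * (k + 1) ^ r + 1 := by
          gcongr
          refine (sum_le_card_nsmul _ _ _ fun x _ => ih x).trans ?_
          rw [smul_eq_mul, card_neighborFinset_eq_degree]
          gcongr
          exact hk c
      _ ≤ (k + 1) ^ (r + 1) := by
          rw [pow_succ]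
          nlinarith [Nat.one_le_pow r (k + 1) k.succ_pos]

theorem mem_ball_of_walk (p : G.Walk v u) {r : ℕ∞} (h : p.length < r) : v ∈ G.ball u r :=
  (edist_le p).trans_lt h

theorem not_adj_of_notMem_ball (h : v ∉ G.ball u 4) : ¬G.Adj u v := fun huv =>
  h (mem_ball_of_walk (.cons huv.symm .nil) (by simp))

theorem not_adj_of_adj_of_notMem_ball (h : v ∉ G.ball u 4) (hux : G.Adj u x) : ¬G.Adj v x :=
  fun hvx => h (mem_ball_of_walk (.cons hvx (.cons hux.symm .nil)) (by simp; norm_num))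

theorem not_adj_of_adj_of_adj_of_notMem_ball (h : v ∉ G.ball u 4) (hux : G.Adj u x)
    (hvy : G.Adj v y) : ¬G.Adj x y := fun hxy =>
  h (mem_ball_of_walk (.cons hvy (.cons hxy.symm (.cons hux.symm .nil))) (by simp; norm_num))

end Ball

section Rewire

variable {V : Type*} {G : SimpleGraph V} {S : Finset V} {p : V → V → V} {u v x y : V}

structure IsPortMap (G : SimpleGraph V) (S : Finset V) (p : V → V → V) : Prop where
  scattered : (S : Set V).Pairwise fun u v => v ∉ G.ball u 4
  bijOn : ∀ v ∈ S, Set.BijOn (p v) ↑(S.erase v) (G.neighborSet v)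

def rewire (G : SimpleGraph V) (S : Finset V) (p : V → V → V) : SimpleGraph V :=
  fromRel fun a b => (G.Adj a b ∧ a ∉ S ∧ b ∉ S) ∨ (a ∈ S ∧ b ∈ S) ∨
    ∃ u ∈ S, ∃ v ∈ S, u ≠ v ∧ a = p u v ∧ b = p v u

namespace IsPortMap

theorem adj (h : IsPortMap G S p) (hv : v ∈ S) (hu : u ∈ S) (huv : u ≠ v) : G.Adj v (p v u) :=
  (h.bijOn v hv).mapsTo (by simp [huv, hu])

theorem notMem_of_adj (h : IsPortMap G S p) (hv : v ∈ S) (hvx : G.Adj v x) : x ∉ S :=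
  fun hx => not_adj_of_notMem_ball (h.scattered hv hx (G.ne_of_adj hvx)) hvx

theorem eq_of_adj_of_adj (h : IsPortMap G S p) (hu : u ∈ S) (hv : v ∈ S) (hux : G.Adj u x)
    (hvx : G.Adj v x) : u = v := by
  by_contra huv
  exact not_adj_of_adj_of_notMem_ball (h.scattered hu hv huv) hux hvx

theorem exists_eq (h : IsPortMap G S p) (hv : v ∈ S) (hvx : G.Adj v x) :
    ∃ u ∈ S, u ≠ v ∧ p v u = x := by
  obtain ⟨u, hu, rfl⟩ := (h.bijOn v hv).surjOn hvx
  simp only [coe_erase, Set.mem_sdiff, mem_coe, Set.mem_singleton_iff] at hu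
  exact ⟨u, hu.1, hu.2, rfl⟩

theorem eq_and_eq_of_eq (h : IsPortMap G S p) (hu : u ∈ S) (hv : v ∈ S) (huv : v ≠ u)
    {u' v' : V} (hu' : u' ∈ S) (hv' : v' ∈ S) (huv' : v' ≠ u') (heq : p u v = p u' v') :
    u = u' ∧ v = v' := by
  obtain rfl := h.eq_of_adj_of_adj hu hu' (h.adj hu hv huv) (heq ▸ h.adj hu' hv' huv')
  exact ⟨rfl, (h.bijOn u hu).injOn (by simp [hv, huv]) (by simp [hv', huv']) heq⟩

theorem ne (h : IsPortMap G S p) (hu : u ∈ S) (hv : v ∈ S) (huv : u ≠ v) : p u v ≠ p v u :=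
  fun heq => huv (h.eq_of_adj_of_adj hu hv (h.adj hu hv huv.symm) (heq ▸ h.adj hv hu huv))

theorem rewire_adj_of_mem (h : IsPortMap G S p) (hx : x ∈ S) :
    (rewire G S p).Adj x y ↔ y ∈ S ∧ x ≠ y := by
  have hport : ∀ u ∈ S, ∀ v ∈ S, u ≠ v → x ≠ p u v := fun u hu v hv huv hxp =>
    h.notMem_of_adj hu (h.adj hu hv huv.symm) (hxp ▸ hx)
  simp only [rewire, fromRel_adj]
  constructor
  · rintro ⟨hne, (⟨-, hx', -⟩ | ⟨-, hy⟩ | ⟨u, hu, v, hv, huv, hxp, -⟩) |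
      (⟨-, -, hx'⟩ | ⟨hy, -⟩ | ⟨u, hu, v, hv, huv, -, hxp⟩)⟩
    · exact absurd hx hx'
    · exact ⟨hy, hne⟩
    · exact absurd hxp (hport u hu v hv huv)
    · exact absurd hx hx'
    · exact ⟨hy, hne⟩
    · exact absurd hxp (hport v hv u hu huv.symm)
  · rintro ⟨hy, hne⟩
    exact ⟨hne, .inl (.inr (.inl ⟨hx, hy⟩))⟩

theorem rewire_adj_of_notMem (h : IsPortMap G S p) (hx : x ∉ S) :
    (rewire G S p).Adj x y ↔
      (G.Adj x y ∧ y ∉ S) ∨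
        ∃ u ∈ S, ∃ v ∈ S, u ≠ v ∧ x = p u v ∧ y = p v u := by
  simp only [rewire, fromRel_adj]
  constructor
  · rintro ⟨-, (⟨hxy, -, hy⟩ | ⟨hx', -⟩ | hport) |
      (⟨hyx, hy, -⟩ | ⟨-, hx'⟩ | ⟨u, hu, v, hv, huv, hy, hx⟩)⟩
    · exact .inl ⟨hxy, hy⟩
    · exact absurd hx' hx
    · exact .inr hport
    · exact .inl ⟨hyx.symm, hy⟩
    · exact absurd hx' hx
    · exact .inr ⟨v, hv, u, hu, huv.symm, hx, hy⟩
  · rintro (⟨hxy, hy⟩ | ⟨u, hu, v, hv, huv, rfl, rfl⟩)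
    · exact ⟨G.ne_of_adj hxy, .inl (.inl ⟨hxy, hx, hy⟩)⟩
    · exact ⟨h.ne hu hv huv, .inl (.inr (.inr ⟨u, hu, v, hv, huv, rfl, rfl⟩))⟩

variable [Fintype V]

theorem neighborFinset_rewire_of_mem (h : IsPortMap G S p) (hx : x ∈ S) :
    (rewire G S p).neighborFinset x = S.erase x := by
  ext y
  rw [mem_neighborFinset, h.rewire_adj_of_mem hx, mem_erase, and_comm, ne_comm]

theorem neighborFinset_rewire_of_port (h : IsPortMap G S p) (hu : u ∈ S) (hv : v ∈ S)
    (huv : u ≠ v) :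
    (rewire G S p).neighborFinset (p v u) =
      insert (p u v) ((G.neighborFinset (p v u)).erase v) := by
  ext y
  rw [mem_neighborFinset, h.rewire_adj_of_notMem (h.notMem_of_adj hv (h.adj hv hu huv)),
    mem_insert, mem_erase, mem_neighborFinset]
  constructor
  · rintro (⟨hxy, hy⟩ | ⟨u', hu', v', hv', huv', hx, rfl⟩)
    · exact .inr ⟨fun hyv => hy (hyv ▸ hv), hxy⟩
    · obtain ⟨rfl, rfl⟩ := h.eq_and_eq_of_eq hv hu huv hu' hv' huv'.symm hx
      exact .inl rfl
  · rintro (rfl | ⟨hyv, hxy⟩)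
    · exact .inr ⟨v, hv, u, hu, huv.symm, rfl, rfl⟩
    · exact .inl ⟨hxy, fun hy => hyv (h.eq_of_adj_of_adj hy hv hxy.symm (h.adj hv hu huv))⟩

theorem neighborFinset_rewire_of_forall_not_adj (h : IsPortMap G S p) (hx : x ∉ S)
    (hno : ∀ v ∈ S, ¬G.Adj v x) : (rewire G S p).neighborFinset x = G.neighborFinset x := by
  ext y
  rw [mem_neighborFinset, h.rewire_adj_of_notMem hx, mem_neighborFinset]
  constructor
  · rintro (⟨hxy, -⟩ | ⟨u, hu, v, hv, huv, rfl, -⟩)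
    · exact hxy
    · exact absurd (h.adj hu hv huv.symm) (hno u hu)
  · exact fun hxy => .inl ⟨hxy, fun hy => hno y hy hxy.symm⟩

theorem degree_rewire (h : IsPortMap G S p) (x : V) : (rewire G S p).degree x = G.degree x := by
  rw [← card_neighborFinset_eq_degree, ← card_neighborFinset_eq_degree]
  by_cases hx : x ∈ S
  · rw [h.neighborFinset_rewire_of_mem hx]
    exact Set.BijOn.finsetCard_eq (p x) (by rw [coe_neighborFinset]; exact h.bijOn x hx)
  by_cases hN : ∃ v ∈ S, G.Adj v x
  · obtain ⟨v, hv, hvx⟩ := hN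
    obtain ⟨u, hu, huv, rfl⟩ := h.exists_eq hv hvx
    have hfar : ¬G.Adj (p v u) (p u v) := not_adj_of_adj_of_adj_of_notMem_ball
      (h.scattered hv hu huv.symm) (h.adj hv hu huv) (h.adj hu hv huv.symm)
    rw [h.neighborFinset_rewire_of_port hu hv huv,
      card_insert_of_notMem fun hmem => hfar ((mem_neighborFinset ..).1 (mem_of_mem_erase hmem)),
      card_erase_add_one ((mem_neighborFinset ..).2 hvx.symm)]
  · push Not at hN
    rw [h.neighborFinset_rewire_of_forall_not_adj hx hN]

end IsPortMap

end Rewire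

variable {V : Type*} [Fintype V] {G : SimpleGraph V} {k : ℕ}

theorem exists_degree_eq_forall_adj_mem {S : Finset V}
    (hS : (S : Set V).Pairwise fun u v => v ∉ G.ball u 4)
    (hdeg : ∀ v ∈ S, G.degree v + 1 = #S) :
    ∃ G' : SimpleGraph V,
      (∀ v, G'.degree v = G.degree v) ∧ ∀ x y, G'.Adj x y → x ∈ S → y ∈ S := by
  have hport (v : V) :
      ∃ f : V → V, v ∈ S → Set.BijOn f ↑(S.erase v) (G.neighborSet v) := by
    by_cases hv : v ∈ S
    · have : Nonempty V := ⟨v⟩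
      refine (S.erase v).finite_toSet.exists_bijOn_of_encard_eq ?_ |>.imp fun _ hf _ => hf
      rw [← coe_neighborFinset, Set.encard_coe_eq_coe_finsetCard,
        Set.encard_coe_eq_coe_finsetCard, card_erase_of_mem hv, card_neighborFinset_eq_degree,
        ← hdeg v hv, Nat.add_sub_cancel]
    · exact ⟨id, fun hv' => absurd hv' hv⟩
  choose p hp using hport
  have h : IsPortMap G S p := ⟨hS, hp⟩
  exact ⟨rewire G S p, h.degree_rewire, fun x y hxy hx => ((h.rewire_adj_of_mem hx).1 hxy).1⟩

theorem exists_scattered_of_card_lt (hk : ∀ v, G.degree v ≤ k)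
    (hV : (k + 1) ^ 5 < Fintype.card V) :
    ∃ d ≤ k, ∃ S : Finset V, #S = d + 1 ∧ (∀ v ∈ S, G.degree v = d) ∧
      (S : Set V).Pairwise fun u v => v ∉ G.ball u 4 := by
  obtain ⟨d, hd, hT⟩ := exists_lt_card_fiber_of_mul_lt_card_of_maps_to (s := univ)
    (t := range (k + 1)) (f := fun v => G.degree v) (n := (k + 1) ^ 4)
    (fun v _ => mem_range.2 (Nat.lt_succ_of_le (hk v)))
    (by rwa [card_range, card_univ, ← pow_succ'])
  have hdk : d ≤ k := Nat.lt_succ_iff.1 (mem_range.1 hd)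
  obtain ⟨S, hST, hS, hpair⟩ := exists_subset_card_eq_pairwise_notMem (B := fun u => G.ball u 4)
    (D := (k + 1) ^ 3) (by positivity) (fun u => mem_ball_self (by norm_num))
    (fun u v => mem_ball_comm.1) (fun u => by convert ncard_ball_le hk u 3; norm_num) (d + 1) _
    (le_trans (by rw [pow_succ' _ 3]; gcongr) hT.le)
  exact ⟨d, hdk, S, hS, fun v hv => (mem_filter.1 (hST hv)).2, hpair⟩

end SimpleGraph

theorem boundedComponentRealizable_degMultiset {V : Type} [Fintype V] {k : ℕ}
    (G : SimpleGraph V) (hk : ∀ v, G.degree v ≤ k) :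
    BoundedComponentRealizable ((k + 1) ^ 5) (degMultiset G) := by
  induction h : Fintype.card V using Nat.strong_induction_on generalizing V with
  | _ n ih =>
  rcases le_or_gt n ((k + 1) ^ 5) with hV | hV
  · exact .of_card_le G (h ▸ hV)
  obtain ⟨d, hdk, S, hS, hdeg, hscat⟩ := exists_scattered_of_card_lt hk (h ▸ hV)
  obtain ⟨G', hG', hclosed⟩ :=
    exists_degree_eq_forall_adj_mem hscat fun v hv => by rw [hdeg v hv, hS]
  rw [degMultiset_congr fun v => (hG' v).symm,
    degMultiset_eq_induce_add_induce_compl G' S hclosed]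
  refine .add (.of_card_le _ ?_) (ih _ ?_ _ (fun v => ?_) rfl)
  · simp only [Finset.coe_sort_coe, Fintype.card_coe, hS]
    exact (Nat.succ_le_succ hdk).trans (Nat.le_self_pow (by norm_num) _)
  · simp only [Fintype.card_compl_set, Finset.coe_sort_coe, Fintype.card_coe, hS, h]
    omega
  · have hv : G'.neighborSet v ⊆ (↑S)ᶜ := fun y hy hyS => v.2 (hclosed y v hy.symm hyS)
    calc (G'.induce (↑S)ᶜ).degree v = G'.degree v := by
          convert degree_induce_of_neighborSet_subset hv
      _ ≤ k := (hG' v).trans_le (hk v)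

/-- **Robertson's question, bounded components form.**
For every `k` there is an `N` such that every finite simple graph of maximum
degree at most `k` has the same degree multiset as some graph all of whose
connected components have at most `N` vertices. -/
theorem bounded_degree_realized_with_bounded_components (k : ℕ) :
    ∃ N : ℕ, ∀ (V : Type) [Fintype V] (G : SimpleGraph V),
      (∀ v : V, G.degree v ≤ k) →
      ∃ (n : ℕ) (H : SimpleGraph (Fin n)),
        degMultiset H = degMultiset G ∧
        ∀ c : H.ConnectedComponent, c.supp.ncard ≤ N :=
  ⟨(k + 1) ^ 5, fun _ _ G hk => (boundedComponentRealizable_degMultiset G hk).exists_fin⟩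
end

section
/- The Rao relation ⪯ on graphic degree sequences is transitive. Precisely: let A₁, A₂, B₂, B₃ be finite simple graphs such that the degree multiset of A₂ equals the degree multiset of B₂, there is an induced-subgraph embedding of A₁ into A₂, and there is an induced-subgraph embedding of B₂ into B₃. Then there exist finite simple graphs C₁ and C₃ such that the degree multiset of C₁ equals the degree multiset of A₁, the degree multiset of C₃ equals the degree multiset of B₃, and there is an induced-subgraph embedding of C₁ into C₃. -/
open scoped Classical

/-!
Since `A₂` and `B₂` have the same degree multiset, some bijection `V₂ ≃ W₂` preserves degrees;
transport `A₂` along it. In `B₃`, replace the induced copy of `B₂` by this copy of `A₂`, keeping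
every edge of `B₃` with an end outside the copy. A vertex of the copy loses its `B₂`-neighbours and
gains equally many `A₂`-neighbours, so all degrees of `B₃` are preserved, while the new graph
contains `A₂`, hence `A₁`, as an induced subgraph.
-/

open Finset

theorem Fintype.exists_equiv_comp_eq_of_map_univ_eq {α β γ : Type*} [Fintype α] [Fintype β]
    {f : α → γ} {g : β → γ} (h : univ.val.map f = univ.val.map g) :
    ∃ e : α ≃ β, ∀ a, g (e a) = f a := by
  have hcard (c : γ) : Fintype.card {a // f a = c} = Fintype.card {b // g b = c} := by
    simpa [Fintype.card_subtype, Multiset.count_map, eq_comm, Finset.card, Finset.filter_val]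
      using congrArg (Multiset.count c) h
  exact ⟨Equiv.ofFiberEquiv fun c => Fintype.equivOfCardEq (hcard c), Equiv.ofFiberEquiv_map _⟩

section DegreeMultiset

variable {V W : Type} [Fintype V] [Fintype W] {G : SimpleGraph V} {H : SimpleGraph W}

theorem degMultiset_eq_of_equiv (e : V ≃ W) (h : ∀ v, H.degree (e v) = G.degree v) :
    degMultiset H = degMultiset G := by
  rw [degMultiset, degMultiset, ← Multiset.map_univ_val_equiv e, Multiset.map_map]
  exact Multiset.map_congr rfl fun v _ => h v

theorem SimpleGraph.Iso.degMultiset_eq (f : G ≃g H) : degMultiset H = degMultiset G :=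
  degMultiset_eq_of_equiv f.toEquiv fun v => f.degree_eq v

theorem exists_iso_degree_eq_of_degMultiset_eq (h : degMultiset G = degMultiset H) :
    ∃ K : SimpleGraph W, Nonempty (G ≃g K) ∧ ∀ w, K.degree w = H.degree w := by
  obtain ⟨e, he⟩ := Fintype.exists_equiv_comp_eq_of_map_univ_eq h
  refine ⟨G.map e, ⟨SimpleGraph.Iso.map e G⟩, e.surjective.forall.mpr fun v => ?_⟩
  rw [he]
  convert (SimpleGraph.Iso.map e G).degree_eq v using 2
  rfl

end DegreeMultiset

namespace SimpleGraph

variable {V W : Type*} [Fintype V] [Fintype W]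

theorem degree_sup_of_disjoint {G₁ G₂ : SimpleGraph W} (h : Disjoint G₁ G₂) (x : W) :
    (G₁ ⊔ G₂).degree x = G₁.degree x + G₂.degree x := by
  rw [← card_neighborFinset_eq_degree, neighborFinset_sup_of_disjoint (h := h), card_disjUnion]
  rfl

theorem degree_map_apply (e : V ↪ W) (K : SimpleGraph V) (v : V) :
    (K.map e).degree (e v) = K.degree v := by
  rw [← card_neighborSet_eq_degree, ← Nat.card_eq_fintype_card, neighborSet_map,
    Nat.card_image_of_injective e.injective, Nat.card_eq_fintype_card, card_neighborSet_eq_degree]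

theorem degree_map_of_notMem_range (e : V ↪ W) (K : SimpleGraph V) {x : W}
    (hx : x ∉ Set.range e) : (K.map e).degree x = 0 := by
  rw [degree_eq_zero]
  rintro y ⟨-, u, v, -, rfl, -⟩
  exact hx ⟨u, rfl⟩

theorem degree_map_congr (e : V ↪ W) {K K' : SimpleGraph V} (h : ∀ v, K.degree v = K'.degree v)
    (x : W) : (K.map e).degree x = (K'.map e).degree x := by
  by_cases hx : x ∈ Set.range e
  · obtain ⟨v, rfl⟩ := hx
    rw [degree_map_apply, degree_map_apply, h]
  · rw [degree_map_of_notMem_range e K hx, degree_map_of_notMem_range e K' hx]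

end SimpleGraph

namespace SimpleGraph.Embedding

variable {V W : Type*} {G : SimpleGraph W} {H : SimpleGraph V} (f : H ↪g G)

/-- Reducible, so that degree lemmas about `⊔` and `\` apply to `f.replace K` directly. -/
abbrev replace (K : SimpleGraph V) : SimpleGraph W :=
  G \ H.map f.toEmbedding ⊔ K.map f.toEmbedding

theorem map_toEmbedding_adj_apply {K : SimpleGraph V} {u v : V} :
    (K.map f.toEmbedding).Adj (f u) (f v) ↔ K.Adj u v :=
  map_adj_apply

theorem map_le : H.map f.toEmbedding ≤ G :=
  (map_le_iff_le_comap _ _ _).mpr f.comap_eq.ge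

theorem disjoint_sdiff_map (K : SimpleGraph V) :
    Disjoint (G \ H.map f.toEmbedding) (K.map f.toEmbedding) := by
  rw [disjoint_iff_inf_le]
  rintro _ _ ⟨⟨hG, hH⟩, -, u, v, -, rfl, rfl⟩
  exact hH (map_adj_apply.mpr (f.map_adj_iff.mp hG))

@[simp]
theorem replace_adj_apply {K : SimpleGraph V} {u v : V} :
    (f.replace K).Adj (f u) (f v) ↔ K.Adj u v := by
  simp only [replace, sup_adj, sdiff_adj, map_toEmbedding_adj_apply, f.map_adj_iff]
  tauto

def toReplace (K : SimpleGraph V) : K ↪g f.replace K where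
  toEmbedding := f.toEmbedding
  map_rel_iff' := f.replace_adj_apply

theorem degree_replace [Fintype V] [Fintype W] {K : SimpleGraph V}
    (h : ∀ v, K.degree v = H.degree v) (x : W) : (f.replace K).degree x = G.degree x :=
  calc (f.replace K).degree x
      = (G \ H.map f.toEmbedding).degree x + (K.map f.toEmbedding).degree x :=
        by convert degree_sup_of_disjoint (f.disjoint_sdiff_map K) x using 3
    _ = (G \ H.map f.toEmbedding).degree x + (H.map f.toEmbedding).degree x := by
        rw [degree_map_congr _ h]
    _ = (G \ H.map f.toEmbedding ⊔ H.map f.toEmbedding).degree x :=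
        by convert (degree_sup_of_disjoint (f.disjoint_sdiff_map H) x).symm using 3
    _ = G.degree x := by congr! 1; exact sdiff_sup_cancel f.map_le

end SimpleGraph.Embedding

/-- **Transitivity of the Rao relation `⪯` on graphic degree sequences.**
If `A₁` embeds into `A₂` as an induced subgraph, `A₂` and `B₂` have the same
degree multiset, and `B₂` embeds into `B₃` as an induced subgraph, then there
are graphs `C₁`, `C₃` realizing the degree sequences of `A₁` and `B₃`
respectively with `C₁` embedding into `C₃` as an induced subgraph. -/
theorem rao_relation_transitive
    {V₁ V₂ W₂ W₃ : Type} [Fintype V₁] [Fintype V₂] [Fintype W₂] [Fintype W₃]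
    (A₁ : SimpleGraph V₁) (A₂ : SimpleGraph V₂)
    (B₂ : SimpleGraph W₂) (B₃ : SimpleGraph W₃)
    (hdeg : degMultiset A₂ = degMultiset B₂)
    (h₁₂ : Nonempty (A₁ ↪g A₂)) (h₂₃ : Nonempty (B₂ ↪g B₃)) :
    ∃ (a c : ℕ) (C₁ : SimpleGraph (Fin a)) (C₃ : SimpleGraph (Fin c)),
      degMultiset C₁ = degMultiset A₁ ∧
      degMultiset C₃ = degMultiset B₃ ∧
      Nonempty (C₁ ↪g C₃) := by
  obtain ⟨i⟩ := h₁₂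
  obtain ⟨f⟩ := h₂₃
  obtain ⟨A₂', ⟨φ⟩, hA₂'⟩ := exists_iso_degree_eq_of_degMultiset_eq hdeg
  let C₃ := f.replace A₂'
  refine ⟨_, _, A₁.overFin rfl, C₃.overFin rfl, (A₁.overFinIso rfl).degMultiset_eq, ?_, ⟨?_⟩⟩
  · rw [(C₃.overFinIso rfl).degMultiset_eq]
    exact degMultiset_eq_of_equiv (Equiv.refl _) (f.degree_replace hA₂')
  · exact (C₃.overFinIso rfl).toEmbedding.comp <| (f.toReplace A₂').comp <|
      φ.toEmbedding.comp <| i.comp (A₁.overFinIso rfl).symm.toEmbedding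
end
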